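/- arXiv:1002.2064 — 3 statements merged into one kernel-verified Lean document; each statement's English description precedes it below -/
import Mathlib

section
/- Let n = 2m+1 be odd and let Q be the standard quadratic form Q(x) = x₁² + ⋯ + x_n² on ℂⁿ. Then the Clifford algebra of Q over ℂ is isomorphic, as a ℂ-algebra, to the direct product of two copies of the full matrix algebra of complex 2^m × 2^m matrices. -/
/-!
With `V = (ℤ/2)^m`, the generalized Pauli matrices `X^u Z^v` (`u v : V`) on `ℂ^V` form a basis of
the matrix algebra and multiply up to signs according to the symplectic form `v ⬝ u' + v' ⬝ u`.
The Jordan–Wigner matrices (`X_k` and `Y_k` with a string of `Z`s on the sites before `k`, and the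
chirality `Z_1 ⋯ Z_m`) are `2m + 1` anticommuting involutions; the first `2m` already generate the
matrix algebra `M`. In `M × M` the family `(γ, γ)`, completed by `(ω, -ω)` for the chirality `ω`,
is therefore a Clifford family generating everything, so the universal property gives a surjection
from the Clifford algebra onto `M × M`. Both sides have dimension `2^(2m+1)` (the Clifford algebra
is linearly isomorphic to the exterior algebra), hence it is an isomorphism.
-/

open Module

structure IsCliffordFamily {A ι : Type*} [Ring A] (γ : ι → A) : Prop where
  mul_self : ∀ i, γ i * γ i = 1
  anticomm : ∀ i j, i ≠ j → γ i * γ j = -(γ j * γ i)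

namespace IsCliffordFamily

variable {R A B ι κ : Type*} [CommRing R] [Ring A] [Algebra R A] {γ : ι → A}

lemma comp (hγ : IsCliffordFamily γ) {e : κ → ι} (he : Function.Injective e) :
    IsCliffordFamily (γ ∘ e) :=
  ⟨fun i => hγ.mul_self (e i), fun i j hij => hγ.anticomm (e i) (e j) (he.ne hij)⟩

lemma smul (hγ : IsCliffordFamily γ) {c : ι → R} (hc : ∀ i, c i * c i = 1) :
    IsCliffordFamily fun i => c i • γ i where
  mul_self i := by rw [smul_mul_smul_comm, hc, hγ.mul_self, one_smul]
  anticomm i j hij := by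
    rw [smul_mul_smul_comm, smul_mul_smul_comm, hγ.anticomm i j hij, mul_comm, smul_neg]

lemma prodMk [Ring B] {δ : ι → B} (hγ : IsCliffordFamily γ) (hδ : IsCliffordFamily δ) :
    IsCliffordFamily fun i => (γ i, δ i) where
  mul_self i := Prod.ext (hγ.mul_self i) (hδ.mul_self i)
  anticomm i j hij := Prod.ext (hγ.anticomm i j hij) (hδ.anticomm i j hij)

lemma sum_smul_mul_self [Fintype ι] (hγ : IsCliffordFamily γ) (x : ι → R) :
    (∑ i, x i • γ i) * (∑ i, x i • γ i) = algebraMap R A (∑ i, x i ^ 2) := by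
  classical
  have expand (a S : A) : (a + S) * (a + S) = a * a + (a * S + S * a) + S * S := by noncomm_ring
  induction (Finset.univ : Finset ι) using Finset.induction_on with
  | empty => simp
  | insert i s hi ih =>
    have cross : x i • γ i * ∑ j ∈ s, x j • γ j + (∑ j ∈ s, x j • γ j) * x i • γ i = 0 := by
      rw [Finset.mul_sum, Finset.sum_mul, ← Finset.sum_add_distrib]
      refine Finset.sum_eq_zero fun j hj => ?_
      rw [smul_mul_smul_comm, smul_mul_smul_comm, hγ.anticomm i j (fun h => hi (h ▸ hj)),
        mul_comm (x i), smul_neg, neg_add_cancel]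
    rw [Finset.sum_insert hi, expand, cross, ih, add_zero, smul_mul_smul_comm, hγ.mul_self,
      Finset.sum_insert hi, map_add, pow_two, Algebra.algebraMap_eq_smul_one (x i * x i)]

variable [Fintype ι] {Q : QuadraticForm R (ι → R)}

noncomputable def lift (hγ : IsCliffordFamily γ) (hQ : ∀ x, Q x = ∑ i, x i ^ 2) :
    CliffordAlgebra Q →ₐ[R] A :=
  CliffordAlgebra.lift Q ⟨Fintype.linearCombination R γ, fun x => by
    rw [Fintype.linearCombination_apply, hQ, hγ.sum_smul_mul_self]⟩

lemma lift_ι_single [DecidableEq ι] (hγ : IsCliffordFamily γ) (hQ : ∀ x, Q x = ∑ i, x i ^ 2)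
    (i : ι) : hγ.lift hQ (CliffordAlgebra.ι Q (Pi.single i 1)) = γ i := by
  rw [lift, CliffordAlgebra.lift_ι_apply]
  exact (Fintype.linearCombination_apply_single R γ i 1).trans (one_smul R _)

end IsCliffordFamily

namespace CliffordAlgebra

variable {K M : Type*} [Field K] [Invertible (2 : K)] [AddCommGroup M] [Module K M]
  [FiniteDimensional K M] (Q : QuadraticForm K M)

instance : FiniteDimensional K (CliffordAlgebra Q) :=
  have : FiniteDimensional K (ExteriorAlgebra K M) := .of_basis (finBasis K M).ExteriorAlgebra
  .equiv (equivExterior Q).symm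

lemma finrank_eq_two_pow : finrank K (CliffordAlgebra Q) = 2 ^ finrank K M := by
  rw [(equivExterior Q).finrank_eq, finrank_eq_card_basis (finBasis K M).ExteriorAlgebra,
    Fintype.card_finset, Fintype.card_fin]

end CliffordAlgebra

lemma IsCliffordFamily.bijective_lift {K A ι : Type*} [Field K] [Invertible (2 : K)] [Ring A]
    [Algebra K A] [FiniteDimensional K A] [Fintype ι] {γ : ι → A} {Q : QuadraticForm K (ι → K)}
    (hγ : IsCliffordFamily γ) (hQ : ∀ x, Q x = ∑ i, x i ^ 2)
    (hgen : Algebra.adjoin K (Set.range γ) = ⊤) (hdim : finrank K A = 2 ^ Fintype.card ι) :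
    Function.Bijective (hγ.lift hQ) := by
  classical
  have hrange : Algebra.adjoin K (Set.range γ) ≤ (hγ.lift hQ).range :=
    Algebra.adjoin_le (Set.range_subset_iff.2 fun i => ⟨_, hγ.lift_ι_single hQ i⟩)
  have hsurj : Function.Surjective (hγ.lift hQ) := fun y => hrange (hgen ▸ Algebra.mem_top)
  have hrank : finrank K (CliffordAlgebra Q) = finrank K A := by
    rw [CliffordAlgebra.finrank_eq_two_pow, finrank_fintype_fun_eq_card, hdim]
  exact ⟨(LinearMap.injective_iff_surjective_of_finrank_eq_finrank hrank
    (f := (hγ.lift hQ).toLinearMap)).2 hsurj, hsurj⟩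

lemma Subalgebra.eq_top_of_diag_mem {R A : Type*} [CommRing R] [Invertible (2 : R)] [Ring A]
    [Algebra R A] (S : Subalgebra R (A × A)) (hdiag : ∀ a, (a, a) ∈ S) {z : A} (hz : z * z = 1)
    (hz' : (z, -z) ∈ S) : S = ⊤ := by
  have hsign : ((1 : A), (-1 : A)) ∈ S := by
    simpa [hz] using S.mul_mem (hdiag z) hz'
  have hfst : ((1 : A), (0 : A)) ∈ S := by
    convert S.smul_mem (S.add_mem S.one_mem hsign) (⅟2 : R) using 1
    ext <;> simp
  have hsnd : ((0 : A), (1 : A)) ∈ S := by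
    convert S.sub_mem S.one_mem hfst using 1
    ext <;> simp
  refine eq_top_iff.2 fun p _ => ?_
  simpa using S.add_mem (S.mul_mem (hdiag p.1) hfst) (S.mul_mem (hdiag p.2) hsnd)

lemma ZMod.two_cases (x : ZMod 2) : x = 0 ∨ x = 1 := by revert x; decide

noncomputable def signChar : AddChar (ZMod 2) ℂ :=
  AddChar.zmodChar 2 (by norm_num : (-1 : ℂ) ^ 2 = 1)

@[simp] lemma signChar_zero : signChar 0 = 1 := AddChar.map_zero_eq_one _

@[simp] lemma signChar_one : signChar 1 = -1 := by
  rw [signChar, AddChar.zmodChar_apply]; exact pow_one _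

lemma signChar_mul_self (w : ZMod 2) : signChar w * signChar w = 1 := by
  rw [← AddChar.map_add_eq_mul, ZModModule.add_self, signChar_zero]

section JordanWignerString

variable {n : Type*} [LinearOrder n]

def jwString (k : n) : n → ZMod 2 := fun j => if j < k then 1 else 0

lemma jwString_self (k : n) : jwString k k = 0 := if_neg (lt_irrefl k)

lemma jwString_add_jwString {k l : n} (h : k ≠ l) : jwString k l + jwString l k = 1 := by
  rcases h.lt_or_gt with h | h <;> simp [jwString, h, h.not_gt]

end JordanWignerString

section Pauli

variable {n : Type*} [Fintype n]

/-- `pauli u v` is the generalized Pauli matrix `X^u Z^v`: the shift by `u` followed by the phase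
`(-1)^(v ⬝ b)`. -/
noncomputable def pauli (u v : n → ZMod 2) : Matrix (n → ZMod 2) (n → ZMod 2) ℂ :=
  Matrix.of fun a b => if b = a + u then signChar (v ⬝ᵥ b) else 0

lemma pauli_zero_zero : pauli (0 : n → ZMod 2) 0 = 1 := by
  ext a b
  simp [pauli, Matrix.one_apply, eq_comm]

variable [DecidableEq n]

lemma pauli_mul (u v u' v' : n → ZMod 2) :
    pauli u v * pauli u' v' = signChar (v ⬝ᵥ u') • pauli (u + u') (v + v') := by
  ext a c
  rw [Matrix.mul_apply, Finset.sum_eq_single (a + u) (fun b _ hb => by simp [pauli, hb]) (by simp)]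
  simp only [pauli, Matrix.of_apply, Matrix.smul_apply, if_true, smul_eq_mul, ← add_assoc]
  split_ifs with h
  · have hau : a + u = c + u' := by rw [h, add_assoc (a + u), ZModModule.add_self, add_zero]
    rw [hau, dotProduct_add, add_dotProduct, AddChar.map_add_eq_mul, AddChar.map_add_eq_mul]
    ring
  · simp

lemma pauli_mul_self (u v : n → ZMod 2) : pauli u v * pauli u v = signChar (v ⬝ᵥ u) • 1 := by
  rw [pauli_mul, ZModModule.add_self, ZModModule.add_self, pauli_zero_zero]

lemma pauli_anticomm {u v u' v' : n → ZMod 2} (h : v ⬝ᵥ u' + v' ⬝ᵥ u = 1) :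
    pauli u v * pauli u' v' = -(pauli u' v' * pauli u v) := by
  have hsign : v ⬝ᵥ u' = 1 + v' ⬝ᵥ u := by rw [← h, add_assoc, ZModModule.add_self, add_zero]
  rw [pauli_mul, pauli_mul, add_comm u', add_comm v', hsign, AddChar.map_add_eq_mul, signChar_one,
    neg_one_mul, neg_smul]

lemma isCliffordFamily_smul_pauli {ι : Type*} {c : ι → ℂ} {u v : ι → n → ZMod 2}
    (hsq : ∀ i, c i * c i * signChar (v i ⬝ᵥ u i) = 1)
    (hanti : ∀ i j, i ≠ j → v i ⬝ᵥ u j + v j ⬝ᵥ u i = 1) :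
    IsCliffordFamily fun i => c i • pauli (u i) (v i) where
  mul_self i := by rw [smul_mul_smul_comm, pauli_mul_self, smul_smul, hsq, one_smul]
  anticomm i j hij := by
    rw [smul_mul_smul_comm, smul_mul_smul_comm, pauli_anticomm (hanti i j hij), mul_comm, smul_neg]

lemma sum_signChar_dotProduct (w : n → ZMod 2) :
    ∑ v : n → ZMod 2, signChar (v ⬝ᵥ w) = if w = 0 then 2 ^ Fintype.card n else 0 := by
  let ψ : AddChar (n → ZMod 2) ℂ :=
    signChar.compAddMonoidHom (AddMonoidHom.mk' (· ⬝ᵥ w) fun a b => add_dotProduct a b w)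
  have hψ : ψ = 0 ↔ w = 0 := by
    refine ⟨fun h => funext fun i => ?_, fun h => AddChar.eq_zero_iff.2 fun v => by simp [ψ, h]⟩
    have := AddChar.eq_zero_iff.1 h (Pi.single i 1)
    simp only [ψ, AddChar.compAddMonoidHom_apply, AddMonoidHom.mk'_apply,
      single_one_dotProduct] at this
    rcases (w i).two_cases with hi | hi
    · exact hi
    · norm_num [hi] at this
  classical
  have := AddChar.sum_eq_ite ψ
  simp only [hψ] at this
  simpa [ψ, Fintype.card_fun, ZMod.card] using this

lemma single_one_eq_sum_pauli (a b : n → ZMod 2) :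
    Matrix.single a b (1 : ℂ) =
      (2 ^ Fintype.card n : ℂ)⁻¹ • ∑ v, signChar (v ⬝ᵥ b) • pauli (a + b) v := by
  ext a' b'
  simp only [Matrix.smul_apply, Matrix.sum_apply, pauli, Matrix.of_apply, smul_eq_mul, mul_ite,
    mul_zero, Matrix.single_apply]
  by_cases h : b' = a' + (a + b)
  · have hab : a = a' ↔ b = b' := by
      constructor <;> rintro rfl
      · rw [h, ← add_assoc, ZModModule.add_self, zero_add]
      · have h0 : a' + a = 0 := add_eq_right.1 ((add_assoc a' a b).trans h.symm)
        rw [add_eq_zero_iff_eq_neg, ZModModule.neg_eq_self] at h0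
        exact h0.symm
    have hb : b + b' = 0 ↔ b = b' := by rw [add_eq_zero_iff_eq_neg, ZModModule.neg_eq_self]
    simp_rw [if_pos h, ← AddChar.map_add_eq_mul, ← dotProduct_add, sum_signChar_dotProduct, hb, hab,
      and_self]
    split_ifs <;> simp
  · simp_rw [if_neg h, Finset.sum_const_zero, mul_zero]
    refine if_neg ?_
    rintro ⟨rfl, rfl⟩
    exact h (by rw [← add_assoc, ZModModule.add_self, zero_add])

lemma span_pauli :
    Submodule.span ℂ (Set.range fun p : (n → ZMod 2) × (n → ZMod 2) => pauli p.1 p.2) = ⊤ := by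
  refine eq_top_iff.2 fun M _ => ?_
  rw [Matrix.matrix_eq_sum_single M]
  refine Submodule.sum_mem _ fun a _ => Submodule.sum_mem _ fun b _ => ?_
  rw [← mul_one (M a b), ← smul_eq_mul, ← Matrix.smul_single, single_one_eq_sum_pauli]
  exact Submodule.smul_mem _ _ (Submodule.smul_mem _ _ (Submodule.sum_mem _ fun v _ =>
    Submodule.smul_mem _ _ (Submodule.subset_span ⟨(a + b, v), rfl⟩)))

namespace Subalgebra

variable (T : Subalgebra ℂ (Matrix (n → ZMod 2) (n → ZMod 2) ℂ))

def pauliSupport : AddSubmonoid ((n → ZMod 2) × (n → ZMod 2)) where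
  carrier := {p | pauli p.1 p.2 ∈ T}
  add_mem' {p q} hp hq := by
    have := T.smul_mem (T.mul_mem hp hq) (signChar (p.2 ⬝ᵥ q.1))
    rwa [pauli_mul, smul_smul, signChar_mul_self, one_smul] at this
  zero_mem' := by simp [pauli_zero_zero, T.one_mem]

lemma eq_top_of_pauliSupport_eq_top (h : T.pauliSupport = ⊤) : T = ⊤ := by
  rw [← Algebra.toSubmodule_eq_top, eq_top_iff, ← span_pauli, Submodule.span_le]
  rintro _ ⟨p, rfl⟩
  exact (h ▸ AddSubmonoid.mem_top p : p ∈ T.pauliSupport)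

end Subalgebra

lemma AddSubmonoid.eq_top_of_single_one_mem {L : AddSubmonoid (n → ZMod 2)}
    (h : ∀ i, Pi.single i 1 ∈ L) : L = ⊤ :=
  eq_top_iff.2 fun v _ => Pi.single_induction (· ∈ L) v L.zero_mem (fun _ _ => L.add_mem)
    fun i x => by
      rcases x.two_cases with rfl | rfl
      · simp
      · exact h i

section JordanWigner

variable [LinearOrder n]

/-! Jordan–Wigner encoding: `some (.inl k)` is `X_k` and `some (.inr k)` is `Y_k = i X_k Z_k`, both
preceded by the string `Z_j` for `j < k`; `none` is the chirality `Z_1 ⋯ Z_m`. -/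

def jwShift : Option (n ⊕ n) → n → ZMod 2
  | none => 0
  | some (.inl k) | some (.inr k) => Pi.single k 1

def jwPhase : Option (n ⊕ n) → n → ZMod 2
  | none => 1
  | some (.inl k) => jwString k
  | some (.inr k) => jwString k + Pi.single k 1

noncomputable def jwCoeff : Option (n ⊕ n) → ℂ
  | some (.inr _) => Complex.I
  | _ => 1

noncomputable def jordanWigner (i : Option (n ⊕ n)) : Matrix (n → ZMod 2) (n → ZMod 2) ℂ :=
  jwCoeff i • pauli (jwShift i) (jwPhase i)

lemma isCliffordFamily_jordanWigner : IsCliffordFamily (jordanWigner (n := n)) := by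
  refine isCliffordFamily_smul_pauli ?_ ?_
  · rintro (_ | k | k) <;> simp [jwCoeff, jwShift, jwPhase, jwString_self]
  · rintro (_ | k | k) (_ | l | l) hkl
    · exact absurd rfl hkl
    all_goals simp only [jwShift, jwPhase, dotProduct_single_one, dotProduct_zero, Pi.one_apply,
      Pi.add_apply, add_zero, zero_add]
    all_goals rcases eq_or_ne k l with rfl | h <;>
      simp_all [jwString_self, jwString_add_jwString, Ne.symm]

lemma AddSubmonoid.eq_top_of_forall_jw_mem {L : AddSubmonoid ((n → ZMod 2) × (n → ZMod 2))}
    (h : ∀ i, (jwShift (some i), jwPhase (some i)) ∈ L) : L = ⊤ := by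
  have hZ : L.comap (AddMonoidHom.inr _ _) = ⊤ := eq_top_of_single_one_mem fun k => by
    show ((0 : n → ZMod 2), Pi.single k 1) ∈ L
    convert L.add_mem (h (.inl k)) (h (.inr k)) using 1
    ext <;> simp [jwShift, jwPhase, ZModModule.add_self, ← add_assoc]
  have hX : L.comap (AddMonoidHom.inl _ _) = ⊤ := eq_top_of_single_one_mem fun k => by
    show (Pi.single k 1, (0 : n → ZMod 2)) ∈ L
    convert L.add_mem (h (.inl k)) (hZ.ge (AddSubmonoid.mem_top (jwString k))) using 1
    ext <;> simp [jwShift, jwPhase, ZModModule.add_self]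
  refine eq_top_iff.2 fun p _ => ?_
  simpa using L.add_mem (hX.ge (AddSubmonoid.mem_top p.1)) (hZ.ge (AddSubmonoid.mem_top p.2))

lemma adjoin_range_jordanWigner_some :
    Algebra.adjoin ℂ (Set.range fun i : n ⊕ n => jordanWigner (some i)) = ⊤ := by
  set T := Algebra.adjoin ℂ (Set.range fun i : n ⊕ n => jordanWigner (some i))
  refine T.eq_top_of_pauliSupport_eq_top (AddSubmonoid.eq_top_of_forall_jw_mem fun i => ?_)
  have hc : jwCoeff (some i) ≠ 0 := by rcases i with _ | _ <;> simp [jwCoeff]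
  have := T.smul_mem (Algebra.subset_adjoin (Set.mem_range_self i)) (jwCoeff (some i))⁻¹
  rwa [jordanWigner, smul_smul, inv_mul_cancel₀ hc, one_smul] at this

noncomputable def cliffordPair (i : Option (n ⊕ n)) :
    Matrix (n → ZMod 2) (n → ZMod 2) ℂ × Matrix (n → ZMod 2) (n → ZMod 2) ℂ :=
  (jordanWigner i, i.elim (-1 : ℂ) (fun _ => 1) • jordanWigner i)

lemma isCliffordFamily_cliffordPair : IsCliffordFamily (cliffordPair (n := n)) :=
  isCliffordFamily_jordanWigner.prodMk
    (isCliffordFamily_jordanWigner.smul (by rintro (_ | _) <;> simp))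

lemma adjoin_range_cliffordPair : Algebra.adjoin ℂ (Set.range (cliffordPair (n := n))) = ⊤ := by
  refine Subalgebra.eq_top_of_diag_mem _ (fun a => ?_) (isCliffordFamily_jordanWigner.mul_self none)
    (Algebra.subset_adjoin ⟨none, by simp [cliffordPair]⟩)
  let diag := (AlgHom.id ℂ (Matrix (n → ZMod 2) (n → ZMod 2) ℂ)).prod (AlgHom.id ℂ _)
  have hmap : (Algebra.adjoin ℂ (Set.range fun i : n ⊕ n => jordanWigner (some i))).map diag ≤
      Algebra.adjoin ℂ (Set.range (cliffordPair (n := n))) := by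
    rw [AlgHom.map_adjoin]
    refine Algebra.adjoin_mono ?_
    rintro _ ⟨_, ⟨i, rfl⟩, rfl⟩
    exact ⟨some i, by simp [cliffordPair, diag]⟩
  exact hmap ⟨a, adjoin_range_jordanWigner_some (n := n) ▸ Algebra.mem_top, rfl⟩

end JordanWigner

lemma finrank_matrix_prod_matrix :
    finrank ℂ (Matrix (n → ZMod 2) (n → ZMod 2) ℂ × Matrix (n → ZMod 2) (n → ZMod 2) ℂ) =
      2 ^ (2 * Fintype.card n + 1) := by
  simp only [finrank_prod, finrank_matrix, Fintype.card_fun, ZMod.card, finrank_self]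
  ring

end Pauli

theorem clifford_odd_iso_matrix_prod (m : ℕ)
    (Q : QuadraticForm ℂ (Fin (2 * m + 1) → ℂ))
    (hQ : ∀ x, Q x = ∑ i, (x i) ^ 2) :
    Nonempty (CliffordAlgebra Q ≃ₐ[ℂ]
      (Matrix (Fin (2 ^ m)) (Fin (2 ^ m)) ℂ × Matrix (Fin (2 ^ m)) (Fin (2 ^ m)) ℂ)) := by
  let e : Fin (2 * m + 1) ≃ Option (Fin m ⊕ Fin m) := Fintype.equivOfCardEq (by simp; omega)
  let eK : (Fin m → ZMod 2) ≃ Fin (2 ^ m) := Fintype.equivOfCardEq (by simp [ZMod.card])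
  have hΓ := isCliffordFamily_cliffordPair.comp e.injective
  have hgen : Algebra.adjoin ℂ (Set.range (cliffordPair ∘ e)) = ⊤ := by
    rw [e.surjective.range_comp]; exact adjoin_range_cliffordPair
  have hbij := hΓ.bijective_lift hQ hgen
    (by rw [finrank_matrix_prod_matrix, Fintype.card_fin, Fintype.card_fin])
  exact ⟨(AlgEquiv.ofBijective _ hbij).trans
    (AlgEquiv.prodCongr (Matrix.reindexAlgEquiv ℂ ℂ eK) (Matrix.reindexAlgEquiv ℂ ℂ eK))⟩
end

section
/- Let 0 ≤ r ≤ n with n = 2m even, and define 2×2 complex matrices E = identity, T = [[0,−i],[i,0]], U = [[i,0],[0,−i]], V = [[0,i],[i,0]]. For 1 ≤ k ≤ m set Φ(e_{2k−1}) = τ_{2k−1}·(E ⊗ ⋯ ⊗ E ⊗ U ⊗ T ⊗ ⋯ ⊗ T) and Φ(e_{2k}) = τ_{2k}·(E ⊗ ⋯ ⊗ E ⊗ V ⊗ T ⊗ ⋯ ⊗ T), Kronecker products of m factors in which U (respectively V) occupies the k-th position from the right, T fills the k−1 rightmost positions, E fills the remaining positions, and τ_j = i if j ≤ r and τ_j =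 1 if j > r. Then these 2^m × 2^m matrices satisfy the Clifford relations Φ(e_i)·Φ(e_j) + Φ(e_j)·Φ(e_i) = −2·k_i·δ_{ij}·Id, where k_i = −1 for i ≤ r and k_i = 1 for i > r. -/
/-!
STATEMENT 5: For 0 ≤ r ≤ n = 2m, the matrices Φ(e₁), …, Φ(eₙ) of size 2^m
(realized on the index set `Fin m → Fin 2`), built as Kronecker products of
E, T, U, V with signature factors τ_j (τ_j = i for j ≤ r, else 1), satisfy the
Clifford relations Φ(e_i)Φ(e_j) + Φ(e_j)Φ(e_i) = −2·k_i·δ_{ij}·Id, where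
k_i = −1 for i ≤ r and k_i = 1 for i > r.

Conventions: the m Kronecker factors are indexed by `t : Fin m`, `t = 0` being
the rightmost factor; for the generator with 1-based index `2k−1` (resp. `2k`)
the factor `U` (resp. `V`) sits in position `t = k−1`, `T` fills positions
`t < k−1` (the k−1 rightmost ones) and `E` the remaining ones.  The entry of
the Kronecker product at `(p,q)` is the product over `t` of the entries of the
factors at `(p t, q t)`.  Generators are indexed by `j : Fin (2m)` (0-based),
so the 1-based index is `j+1`.
-/

open Matrix

noncomputable def Emat : Matrix (Fin 2) (Fin 2) ℂ := 1
noncomputable def Tmat : Matrix (Fin 2) (Fin 2) ℂ := !![0, -Complex.I; Complex.I, 0]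
noncomputable def Umat : Matrix (Fin 2) (Fin 2) ℂ := !![Complex.I, 0; 0, -Complex.I]
noncomputable def Vmat : Matrix (Fin 2) (Fin 2) ℂ := !![0, Complex.I; Complex.I, 0]

/-- The 2×2 factor in position `t` (from the right, 0-based) of the Kronecker
product defining the generator whose distinguished factor `M` (= U or V) sits
in position `k`. -/
noncomputable def cliffordFactor (k : ℕ) (M : Matrix (Fin 2) (Fin 2) ℂ) (t : ℕ) :
    Matrix (Fin 2) (Fin 2) ℂ :=
  if t < k then Tmat else if t = k then M else Emat

/-- The spinor matrix `Φ(e_{j+1})` for signature `(r, 2m − r)`: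
`Φ(e_{2k−1}) = τ_{2k−1}·(E ⊗ ⋯ ⊗ E ⊗ U ⊗ T ⊗ ⋯ ⊗ T)` and
`Φ(e_{2k}) = τ_{2k}·(E ⊗ ⋯ ⊗ E ⊗ V ⊗ T ⊗ ⋯ ⊗ T)`, with `τ_j = i` if `j ≤ r`
and `τ_j = 1` otherwise. -/
noncomputable def Phi (r m : ℕ) (j : Fin (2 * m)) :
    Matrix (Fin m → Fin 2) (Fin m → Fin 2) ℂ :=
  (if (j : ℕ) + 1 ≤ r then Complex.I else 1) •
    Matrix.of fun p q => ∏ t : Fin m,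
      cliffordFactor ((j : ℕ) / 2) (if (j : ℕ) % 2 = 0 then Umat else Vmat)
        (t : ℕ) (p t) (q t)

lemma mulTT : Tmat * Tmat = 1 := by
  ext a b; fin_cases a <;> fin_cases b <;>
    simp [Tmat, Matrix.mul_apply, Fin.sum_univ_two, Matrix.one_apply, Complex.I_mul_I]

lemma mulUU : Umat * Umat = -1 := by
  ext a b; fin_cases a <;> fin_cases b <;>
    simp [Umat, Matrix.mul_apply, Fin.sum_univ_two, Matrix.one_apply, Complex.I_mul_I]

lemma mulVV : Vmat * Vmat = -1 := by
  ext a b; fin_cases a <;> fin_cases b <;>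
    simp [Vmat, Matrix.mul_apply, Fin.sum_univ_two, Matrix.one_apply, Complex.I_mul_I]

lemma acUT : Umat * Tmat = -(Tmat * Umat) := by
  ext a b; fin_cases a <;> fin_cases b <;>
    simp [Umat, Tmat, Matrix.mul_apply, Fin.sum_univ_two, Complex.I_mul_I]

lemma acVT : Vmat * Tmat = -(Tmat * Vmat) := by
  ext a b; fin_cases a <;> fin_cases b <;>
    simp [Vmat, Tmat, Matrix.mul_apply, Fin.sum_univ_two, Complex.I_mul_I]

lemma acUV : Umat * Vmat = -(Vmat * Umat) := by
  ext a b; fin_cases a <;> fin_cases b <;>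
    simp [Umat, Vmat, Matrix.mul_apply, Fin.sum_univ_two, Complex.I_mul_I]

noncomputable def kron {m : ℕ} (A : Fin m → Matrix (Fin 2) (Fin 2) ℂ) :
    Matrix (Fin m → Fin 2) (Fin m → Fin 2) ℂ :=
  Matrix.of fun p q => ∏ t, A t (p t) (q t)

lemma kron_mul {m : ℕ} (A B : Fin m → Matrix (Fin 2) (Fin 2) ℂ) :
    kron A * kron B = kron (fun t => A t * B t) := by
  ext p q
  show (∑ s : Fin m → Fin 2, (∏ t, A t (p t) (s t)) * ∏ t, B t (s t) (q t))
      = ∏ t, ∑ x, A t (p t) x * B t x (q t)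
  rw [Finset.prod_univ_sum fun _ => Finset.univ, Fintype.piFinset_univ]
  exact Finset.sum_congr rfl fun s _ => (Finset.prod_mul_distrib).symm

lemma kron_smul {m : ℕ} (s : Fin m → ℂ) (A : Fin m → Matrix (Fin 2) (Fin 2) ℂ) :
    kron (fun t => s t • A t) = (∏ t, s t) • kron A := by
  ext p q
  simp [kron, Finset.prod_mul_distrib]

lemma kron_one {m : ℕ} : kron (fun _ : Fin m => (1 : Matrix (Fin 2) (Fin 2) ℂ)) = 1 := by
  ext p q
  simp only [kron, Matrix.of_apply, Matrix.one_apply]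
  rw [Finset.prod_boole]
  simp [funext_iff]

lemma prod_sign (m c : ℕ) (hc : c < m) :
    ∏ t : Fin m, (if (t : ℕ) = c then (-1:ℂ) else 1) = -1 := by
  have h : ∀ t : Fin m, ((t : ℕ) = c) = (t = (⟨c, hc⟩ : Fin m)) := fun t => by
    simp [Fin.ext_iff]
  simp_rw [h]
  simp [Finset.prod_ite_eq']

lemma factor_anticomm (a b t : ℕ) (M N : Matrix (Fin 2) (Fin 2) ℂ)
    (hMT : M * Tmat = -(Tmat * M)) (hNT : N * Tmat = -(Tmat * N))
    (hMN : a = b → M * N = -(N * M)) :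
    cliffordFactor a M t * cliffordFactor b N t =
      (if t = min a b then (-1:ℂ) else 1) • (cliffordFactor b N t * cliffordFactor a M t) := by
  unfold cliffordFactor Emat
  rcases lt_trichotomy a b with h | h | h
  · rw [min_eq_left h.le]
    rcases lt_trichotomy t a with ht | ht | ht
    · have h1 : t < b := by omega
      have h2 : t ≠ a := by omega
      simp [ht, h1, h2]
    · have h1 : ¬ t < a := by omega
      have h2 : t < b := by omega
      simp [h1, ht, h2, h, hMT]
    · have h1 : ¬ t < a := by omega
      have h2 : t ≠ a := by omega
      simp [h1, h2]
  · subst h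
    rw [min_self]
    rcases lt_trichotomy t a with ht | ht | ht
    · have h2 : t ≠ a := by omega
      simp [ht, h2]
    · have h1 : ¬ t < a := by omega
      simp [h1, ht, hMN rfl]
    · have h1 : ¬ t < a := by omega
      have h2 : t ≠ a := by omega
      simp [h1, h2]
  · rw [min_eq_right h.le]
    have hTN : Tmat * N = -(N * Tmat) := by rw [hNT, neg_neg]
    rcases lt_trichotomy t b with ht | ht | ht
    · have h1 : t < a := by omega
      have h2 : t ≠ b := by omega
      simp [ht, h1, h2]
    · have h1 : ¬ t < b := by omega
      have h2 : t < a := by omega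
      simp [h1, ht, h2, h, hTN]
    · have h1 : ¬ t < b := by omega
      have h2 : t ≠ b := by omega
      simp [h1, h2]

lemma factor_sq (a t : ℕ) (M : Matrix (Fin 2) (Fin 2) ℂ) (hM : M * M = -1) :
    cliffordFactor a M t * cliffordFactor a M t =
      (if t = a then (-1:ℂ) else 1) • 1 := by
  unfold cliffordFactor Emat
  rcases lt_trichotomy t a with ht | ht | ht
  · have h2 : t ≠ a := by omega
    simp [ht, h2, mulTT]
  · have h1 : ¬ t < a := by omega
    simp [h1, ht, hM]
  · have h1 : ¬ t < a := by omega
    have h2 : t ≠ a := by omega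
    simp [h1, h2]

theorem Phi_clifford_relations (r m : ℕ) (hr : r ≤ 2 * m) (i j : Fin (2 * m)) :
    Phi r m i * Phi r m j + Phi r m j * Phi r m i =
      ((-2 : ℂ) * (if (i : ℕ) + 1 ≤ r then (-1 : ℂ) else 1) *
        (if i = j then 1 else 0)) • (1 : Matrix (Fin m → Fin 2) (Fin m → Fin 2) ℂ) := by
  have hi := i.isLt
  have hj := j.isLt
  set τ : Fin (2 * m) → ℂ := fun k => if (k : ℕ) + 1 ≤ r then Complex.I else 1 with hτ
  set F : Fin (2 * m) → Fin m → Matrix (Fin 2) (Fin 2) ℂ :=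
    fun k t => cliffordFactor ((k : ℕ) / 2)
      (if (k : ℕ) % 2 = 0 then Umat else Vmat) (t : ℕ) with hF
  have hPhi : ∀ k, Phi r m k = τ k • kron (F k) := fun k => rfl
  have hmul : ∀ k l, Phi r m k * Phi r m l
      = (τ k * τ l) • kron (fun t => F k t * F l t) := by
    intro k l
    rw [hPhi, hPhi, Matrix.smul_mul, Matrix.mul_smul, smul_smul, kron_mul]
  by_cases hij : i = j
  · subst hij
    have ha : (i : ℕ) / 2 < m := by omega
    have hsq : (fun t => F i t * F i t)
        = fun t : Fin m => (if (t : ℕ) = (i : ℕ) / 2 then (-1:ℂ) else 1) • 1 := by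
      funext t
      exact factor_sq _ _ _ (by split <;> [exact mulUU; exact mulVV])
    rw [hmul, hsq, kron_smul, prod_sign m _ ha, kron_one, smul_smul]
    rw [← add_smul]
    congr 1
    simp only [hτ, if_pos rfl]
    by_cases h : (i : ℕ) + 1 ≤ r <;> simp [h] <;> ring_nf <;>
      simp [Complex.I_sq] <;> ring
  · have hij' : (i : ℕ) ≠ (j : ℕ) := fun h => hij (Fin.ext h)
    have hc : min ((i : ℕ) / 2) ((j : ℕ) / 2) < m := by omega
    have key : (fun t => F i t * F j t) = fun t : Fin m =>
        (if (t : ℕ) = min ((i : ℕ) / 2) ((j : ℕ) / 2) then (-1:ℂ) else 1)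
          • (F j t * F i t) := by
      funext t
      apply factor_anticomm
      · split <;> [exact acUT; exact acVT]
      · split <;> [exact acUT; exact acVT]
      · intro hab
        have hpar : (i : ℕ) % 2 ≠ (j : ℕ) % 2 := by omega
        rcases Nat.mod_two_eq_zero_or_one (i : ℕ) with hi2 | hi2 <;>
          rcases Nat.mod_two_eq_zero_or_one (j : ℕ) with hj2 | hj2 <;>
            simp [hi2, hj2] at hpar ⊢
        · exact acUV
        · rw [acUV, neg_neg]
    rw [hmul, hmul, key, kron_smul, prod_sign m _ hc, smul_smul]
    rw [if_neg hij, ← add_smul]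
    rw [show τ i * τ j * -1 + τ j * τ i = 0 by ring]
    simp
end

section
/- Let V be a real vector space with a symmetric bilinear form g for which there exists v ∈ V with g(v,v) ≠ 0, let Q(v) = −g(v,v), and let Cl(Q) be the Clifford algebra. Let S be a complex vector space and ρ : Cl(Q) → End_ℂ(S) an ℝ-algebra homomorphism. Let I : V → V be ℝ-linear with I² = −id. Suppose α ∈ ℂ and there exists a nonzero s₁ ∈ S with ρ(ι(X))·s₁ = i·α·ρ(ι(IX))·s₁ for all X ∈ V. Then α² = 1. -/
/-!
STATEMENT 11: Let V be a real vector space with a symmetric bilinear form g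
having some v with g(v,v) ≠ 0, Q(v) = −g(v,v), Cl(Q) the Clifford algebra, S a
complex vector space and ρ : Cl(Q) → End_ℂ(S) an ℝ-algebra homomorphism.  Let
I : V → V be ℝ-linear with I² = −id.  If α ∈ ℂ and there is a nonzero s₁ ∈ S
with ρ(ι(X))·s₁ = i·α·ρ(ι(IX))·s₁ for all X ∈ V, then α² = 1.
-/

theorem recurrent_spinor_complex_structure_sign (V : Type*)
    [AddCommGroup V] [Module ℝ V]
    (g : V →ₗ[ℝ] V →ₗ[ℝ] ℝ)
    (hgsymm : ∀ x y, g x y = g y x)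
    (hganiso : ∃ v, g v v ≠ 0)
    (Q : QuadraticForm ℝ V)
    (hQ : ∀ v, Q v = -(g v v))
    (S : Type*) [AddCommGroup S] [Module ℂ S] [Module ℝ S]
    [IsScalarTower ℝ ℂ S] [SMulCommClass ℂ ℝ S]
    (ρ : CliffordAlgebra Q →ₐ[ℝ] Module.End ℂ S)
    (I : V →ₗ[ℝ] V)
    (hI2 : ∀ v, I (I v) = -v)
    (α : ℂ) (s₁ : S) (hs₁ : s₁ ≠ 0)
    (hrec : ∀ X, ρ (CliffordAlgebra.ι Q X) s₁ =
      (Complex.I * α) • (ρ (CliffordAlgebra.ι Q (I X)) s₁)) :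
    α ^ 2 = 1 := by
  obtain ⟨v, hv⟩ := hganiso
  -- ρ(ι v) s₁ ≠ 0 since ρ(ι v)² = Q v • id with Q v ≠ 0
  have hsq : ρ (CliffordAlgebra.ι Q v) (ρ (CliffordAlgebra.ι Q v) s₁) = Q v • s₁ := by
    have h1 : ρ (CliffordAlgebra.ι Q v) * ρ (CliffordAlgebra.ι Q v)
        = ρ (algebraMap ℝ _ (Q v)) := by
      rw [← map_mul, CliffordAlgebra.ι_sq_scalar]
    have h2 : (ρ (CliffordAlgebra.ι Q v) * ρ (CliffordAlgebra.ι Q v)) s₁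
        = ρ (algebraMap ℝ _ (Q v)) s₁ := by rw [h1]
    have h3 : ρ (algebraMap ℝ _ (Q v)) s₁ = Q v • s₁ := by
      rw [AlgHom.commutes]
      simp [Algebra.algebraMap_eq_smul_one]
    rw [Module.End.mul_apply] at h2
    exact h2.trans h3
  have hne : ρ (CliffordAlgebra.ι Q v) s₁ ≠ 0 := by
    intro h
    rw [h, map_zero] at hsq
    have hQv : Q v ≠ 0 := by rw [hQ]; simpa using hv
    exact hs₁ (by simpa [smul_eq_zero, hQv] using hsq.symm)
  -- iterate the recurrence
  have key : ρ (CliffordAlgebra.ι Q v) s₁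
      = (α ^ 2) • ρ (CliffordAlgebra.ι Q v) s₁ := by
    have h1 := hrec v
    have h2 := hrec (I v)
    rw [h2, hI2, map_neg, map_neg, LinearMap.neg_apply, smul_neg, smul_neg, smul_smul] at h1
    have hc : Complex.I * α * (Complex.I * α) = -(α ^ 2) := by
      linear_combination α ^ 2 * Complex.I_sq
    rw [hc, neg_smul, neg_neg] at h1
    exact h1
  have : (α ^ 2 - 1) • ρ (CliffordAlgebra.ι Q v) s₁ = 0 := by
    rw [sub_smul, one_smul, ← key, sub_self]
  rcases smul_eq_zero.mp this with h | h
  · linear_combination h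
  · exact absurd h hne
end
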